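/- For every integer n ≥ 1: f_4(n) ≡ 1 (mod 3) if n = 3^m or n = 2·3^m for some integer m ≥ 0; f_4(n) ≡ 2 (mod 3) if n = 3^a + 3^b for some integers a > b ≥ 0; and f_4(n) ≡ 0 (mod 3) in all other cases. -/

import Mathlib

/-!
Over `𝔽₃`, `f₄(k+1)` is the coefficient of `X^k` in `(1+X)^(3k+2) / (1-X)^(k+1)`, i.e. `c₂(k)`
where `c_r(k) = [X^k] (1+X)^(3k+r) / (1-X)^(k+1)` (`diagCoeff r k`). For `k = 3m + j` the Frobenius
identities `(1+X)³ = 1+X³` and `(1-X)³ = 1-X³` write this series as `S(X³) · (1+X)^r (1-X)^(2-j)`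
with `[X^m] S = c_j(m)`, so `c_r(3m+j) = [X^m] (S · σ)` for the `j`-th `3`-section `σ` of this
polynomial of degree at most four; these sections are `0`, `±1` or `1+X`. The resulting base-3
recursion shows that `c₁` vanishes away from `0` and that `c₀` is `-1` at powers of `3` and `0` at
other positive arguments; since `f₄(3n) ≡ f₄(n)`, `f₄(3m+1) ≡ c₀(m)` and `f₄(3m+2) ≡ c₁(m)`, the
classification follows by induction on the base-3 digits of `n`.
-/

open Finset

/-- `f₄(n) = Σ_{i=n-1}^{2n-2} C(3n-1, n+i+1)·C(i, n-1)` for `n ≥ 1`. -/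
def f4 (n : ℕ) : ℕ :=
  ∑ i ∈ Finset.Icc (n - 1) (2 * n - 2), (3 * n - 1).choose (n + i + 1) * i.choose (n - 1)

open PowerSeries

instance PowerSeries.charP {R : Type*} [CommRing R] (p : ℕ) [CharP R p] : CharP R⟦X⟧ p :=
  charP_of_injective_ringHom C_injective p

section Expand

variable {R : Type*} [CommRing R] {p : ℕ}

theorem PowerSeries.coeff_expand_mul_sum (hp : p ≠ 0) (W : R⟦X⟧) (q : Fin p → R⟦X⟧) (j : Fin p)
    (m : ℕ) :
    coeff (p * m + j) (expand p hp W * ∑ k : Fin p, X ^ (k : ℕ) * expand p hp (q k)) =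
      coeff m (W * q j) := by
  have hterm (k : Fin p) : expand p hp W * (X ^ (k : ℕ) * expand p hp (q k)) =
      X ^ (k : ℕ) * expand p hp (W * q k) := by
    rw [map_mul]; ring
  rw [Finset.mul_sum, Finset.sum_congr rfl fun k _ => hterm k, map_sum,
    Finset.sum_eq_single j]
  · rw [coeff_X_pow_mul', if_pos (by omega), Nat.add_sub_cancel, coeff_expand_mul]
  · intro k _ hkj
    rw [coeff_X_pow_mul']
    split_ifs
    · refine coeff_expand_of_not_dvd p hp _ fun ⟨c, hc⟩ => hkj (Fin.ext ?_)
      have hmod := congrArg (· % p) (show p * c + k = p * m + j by omega)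
      simpa [Nat.mul_add_mod, Nat.mod_eq_of_lt k.isLt, Nat.mod_eq_of_lt j.isLt] using hmod
    · rfl
  · simp

variable [CharP R p]

theorem PowerSeries.expand_one_add_X (hp : p.Prime) :
    expand p hp.ne_zero (1 + X : R⟦X⟧) = (1 + X) ^ p := by
  have := Fact.mk hp
  rw [map_add, map_one, expand_X, add_pow_char, one_pow]

theorem PowerSeries.expand_invOneSubPow (hp : p.Prime) (d : ℕ) :
    expand p hp.ne_zero (invOneSubPow R d : R⟦X⟧) = invOneSubPow R (p * d) := by
  have := Fact.mk hp
  have hfrob : expand p hp.ne_zero ((1 - X : R⟦X⟧) ^ d) = (1 - X) ^ (p * d) := by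
    rw [map_pow, map_sub, map_one, expand_X, pow_mul, sub_pow_char (p := p), one_pow]
  have hinv (e : ℕ) : (1 - X : R⟦X⟧) ^ e * invOneSubPow R e = 1 := by
    simpa [invOneSubPow_zero] using
      one_sub_pow_mul_invOneSubPow_val_add_eq_invOneSubPow_val R 0 e
  calc expand p hp.ne_zero (invOneSubPow R d : R⟦X⟧)
      = expand p hp.ne_zero ((invOneSubPow R d : R⟦X⟧) * (1 - X) ^ d) *
          (invOneSubPow R (p * d) : R⟦X⟧) := by
        rw [map_mul, hfrob, mul_assoc, hinv, mul_one]
    _ = invOneSubPow R (p * d) := by rw [mul_comm _ ((1 - X) ^ d), hinv, map_one, one_mul]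

theorem PowerSeries.one_add_X_pow_mul_invOneSubPow (hp : p.Prime) (a r : ℕ) {d D e : ℕ}
    (h : D + e = p * d) :
    (1 + X : R⟦X⟧) ^ (p * a + r) * (invOneSubPow R D : R⟦X⟧) =
      expand p hp.ne_zero ((1 + X) ^ a * (invOneSubPow R d : R⟦X⟧)) *
        ((1 + X) ^ r * (1 - X) ^ e) := by
  rw [map_mul, map_pow, expand_one_add_X hp, expand_invOneSubPow hp, ← h,
    ← one_sub_pow_mul_invOneSubPow_val_add_eq_invOneSubPow_val R D e]
  ring

end Expand

theorem PowerSeries.coeff_one_add_X_pow_mul_invOneSubPow {R : Type*} [CommRing R] (A d m : ℕ) :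
    coeff m ((1 + X : R⟦X⟧) ^ A * (invOneSubPow R (d + 1) : R⟦X⟧)) =
      ((∑ x ∈ antidiagonal m, A.choose x.1 * (d + x.2).choose d : ℕ) : R) := by
  have hbinom : (1 + X : R⟦X⟧) ^ A = (((1 + Polynomial.X) ^ A : Polynomial R) : R⟦X⟧) := by
    push_cast; rfl
  rw [coeff_mul, invOneSubPow_val_succ_eq_mk_add_choose]
  push_cast
  refine Finset.sum_congr rfl fun x _ => ?_
  rw [hbinom, Polynomial.coeff_coe, Polynomial.coeff_one_add_X_pow, coeff_mk]

noncomputable def diagCoeff (r m : ℕ) : ZMod 3 :=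
  coeff m ((1 + X) ^ (3 * m + r) * (invOneSubPow (ZMod 3) (m + 1) : (ZMod 3)⟦X⟧))

theorem diagCoeff_zero_right (r : ℕ) : diagCoeff r 0 = 1 := by
  simp [diagCoeff, invOneSubPow_val_succ_eq_mk_add_choose]

theorem diagCoeff_three_mul_add (r m : ℕ) (j : Fin 3) (q : Fin 3 → (ZMod 3)⟦X⟧)
    (hq : (1 + X) ^ r * (1 - X) ^ (2 - (j : ℕ)) =
      ∑ k : Fin 3, X ^ (k : ℕ) * expand 3 three_ne_zero (q k)) :
    diagCoeff r (3 * m + j) =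
      coeff m ((1 + X) ^ (3 * m + j) * (invOneSubPow (ZMod 3) (m + 1) : (ZMod 3)⟦X⟧) * q j) := by
  rw [diagCoeff, one_add_X_pow_mul_invOneSubPow Nat.prime_three (d := m + 1)
    (D := 3 * m + j + 1) (e := 2 - j) _ _ (by omega), hq, coeff_expand_mul_sum]

section Digits

variable (m : ℕ)

theorem diagCoeff_zero_three_mul : diagCoeff 0 (3 * m) = diagCoeff 0 m := by
  simpa [diagCoeff] using diagCoeff_three_mul_add 0 m 0 ![1, -2, 1]
    (by simp [Fin.sum_univ_three, map_ofNat]; ring)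

theorem diagCoeff_zero_three_mul_add_one : diagCoeff 0 (3 * m + 1) = -diagCoeff 1 m := by
  simpa [diagCoeff] using diagCoeff_three_mul_add 0 m 1 ![1, -1, 0]
    (by simp [Fin.sum_univ_three]; ring)

theorem diagCoeff_zero_three_mul_add_two : diagCoeff 0 (3 * m + 2) = 0 := by
  simpa [diagCoeff] using diagCoeff_three_mul_add 0 m 2 ![1, 0, 0]
    (by simp [Fin.sum_univ_three])

theorem diagCoeff_one_three_mul : diagCoeff 1 (3 * m) = diagCoeff 1 m := by
  simpa [diagCoeff, mul_assoc, mul_comm, pow_succ] using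
    diagCoeff_three_mul_add 1 m 0 ![1 + X, -1, -1] (by simp [Fin.sum_univ_three, expand_X]; ring)

theorem diagCoeff_one_three_mul_add_one : diagCoeff 1 (3 * m + 1) = 0 := by
  simpa [diagCoeff] using diagCoeff_three_mul_add 1 m 1 ![1, 0, -1]
    (by simp [Fin.sum_univ_three]; ring)

theorem diagCoeff_one_three_mul_add_two : diagCoeff 1 (3 * m + 2) = 0 := by
  simpa [diagCoeff] using diagCoeff_three_mul_add 1 m 2 ![1, 1, 0]
    (by simp [Fin.sum_univ_three])

theorem diagCoeff_two_three_mul : diagCoeff 2 (3 * m) = diagCoeff 0 m := by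
  simpa [diagCoeff] using diagCoeff_three_mul_add 2 m 0 ![1, X, -2]
    (by simp [Fin.sum_univ_three, expand_X, map_ofNat]; ring)

theorem diagCoeff_two_three_mul_add_one : diagCoeff 2 (3 * m + 1) = diagCoeff 1 m := by
  simpa [diagCoeff] using diagCoeff_three_mul_add 2 m 1 ![1 - X, 1, -1]
    (by simp [Fin.sum_univ_three, expand_X]; ring)

theorem diagCoeff_two_three_mul_add_two : diagCoeff 2 (3 * m + 2) = diagCoeff 2 m := by
  simpa [diagCoeff] using diagCoeff_three_mul_add 2 m 2 ![1, 2, 1]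
    (by simp [Fin.sum_univ_three, map_ofNat]; ring)

end Digits

theorem diagCoeff_one_of_ne_zero {n : ℕ} (hn : n ≠ 0) : diagCoeff 1 n = 0 := by
  induction n using Nat.strong_induction_on with
  | _ n ih =>
    obtain ⟨m, rfl | rfl | rfl⟩ : ∃ m, n = 3 * m ∨ n = 3 * m + 1 ∨ n = 3 * m + 2 :=
      ⟨n / 3, by omega⟩
    · rw [diagCoeff_one_three_mul]; exact ih m (by omega) (by omega)
    · exact diagCoeff_one_three_mul_add_one m
    · exact diagCoeff_one_three_mul_add_two m

theorem diagCoeff_zero_three_pow (a : ℕ) : diagCoeff 0 (3 ^ a) = -1 := by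
  induction a with
  | zero => simpa [diagCoeff_zero_right] using diagCoeff_zero_three_mul_add_one 0
  | succ a ih => rw [pow_succ', diagCoeff_zero_three_mul, ih]

theorem eq_zero_or_eq_three_pow_of_diagCoeff_zero_ne_zero {n : ℕ} (h : diagCoeff 0 n ≠ 0) :
    n = 0 ∨ ∃ a, n = 3 ^ a := by
  induction n using Nat.strong_induction_on with
  | _ n ih =>
    obtain ⟨m, rfl | rfl | rfl⟩ : ∃ m, n = 3 * m ∨ n = 3 * m + 1 ∨ n = 3 * m + 2 :=
      ⟨n / 3, by omega⟩
    · obtain rfl | hm := eq_or_ne m 0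
      · exact Or.inl rfl
      rw [diagCoeff_zero_three_mul] at h
      obtain rfl | ⟨a, rfl⟩ := ih m (by omega) h
      · exact Or.inl rfl
      · exact Or.inr ⟨a + 1, by ring⟩
    · rw [diagCoeff_zero_three_mul_add_one, neg_ne_zero] at h
      obtain rfl : m = 0 := by_contra fun hm => h (diagCoeff_one_of_ne_zero hm)
      exact Or.inr ⟨0, rfl⟩
    · exact absurd (diagCoeff_zero_three_mul_add_two m) h

theorem f4_succ (k : ℕ) :
    f4 (k + 1) = ∑ x ∈ antidiagonal k, (3 * k + 2).choose x.1 * (k + x.2).choose k := by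
  rw [f4, Finset.Nat.sum_antidiagonal_eq_sum_range_succ
      (fun a b => (3 * k + 2).choose a * (k + b).choose k),
    ← Finset.sum_range_reflect,
    show Finset.Icc (k + 1 - 1) (2 * (k + 1) - 2) = Finset.Ico k (2 * k + 1) by ext; simp; omega,
    Finset.sum_Ico_eq_sum_range, show 2 * k + 1 - k = k + 1 by omega]
  refine Finset.sum_congr rfl fun b hb => ?_
  rw [Finset.mem_range] at hb
  rw [show 3 * (k + 1) - 1 = 3 * k + 2 by omega, show k + 1 - 1 = k by omega,
    Nat.choose_symm_of_eq_add (show 3 * k + 2 = (k - b) + (k + 1 + (k + b) + 1) by omega),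
    show k - (k - b) = b by omega]

theorem cast_f4_succ (k : ℕ) : (f4 (k + 1) : ZMod 3) = diagCoeff 2 k := by
  rw [diagCoeff, coeff_one_add_X_pow_mul_invOneSubPow, f4_succ]

theorem cast_f4_three_mul_add_one (m : ℕ) : (f4 (3 * m + 1) : ZMod 3) = diagCoeff 0 m := by
  rw [cast_f4_succ, diagCoeff_two_three_mul]

theorem cast_f4_three_mul_add_two (m : ℕ) : (f4 (3 * m + 2) : ZMod 3) = diagCoeff 1 m := by
  rw [cast_f4_succ, diagCoeff_two_three_mul_add_one]

theorem cast_f4_three_mul {n : ℕ} (hn : n ≠ 0) : (f4 (3 * n) : ZMod 3) = f4 n := by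
  obtain ⟨k, rfl⟩ := Nat.exists_eq_succ_of_ne_zero hn
  rw [show 3 * (k + 1) = 3 * k + 2 + 1 by ring, cast_f4_succ, cast_f4_succ,
    diagCoeff_two_three_mul_add_two]

theorem cast_f4_three_pow_mul (a : ℕ) {n : ℕ} (hn : n ≠ 0) :
    (f4 (3 ^ a * n) : ZMod 3) = f4 n := by
  induction a with
  | zero => rw [pow_zero, one_mul]
  | succ a ih => rw [pow_succ', mul_assoc, cast_f4_three_mul (by positivity), ih]

theorem cast_f4_three_pow (a : ℕ) : (f4 (3 ^ a) : ZMod 3) = 1 := by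
  rw [← mul_one (3 ^ a), cast_f4_three_pow_mul a one_ne_zero,
    show 1 = 3 * 0 + 1 from rfl, cast_f4_three_mul_add_one, diagCoeff_zero_right]

theorem cast_f4_two_mul_three_pow (a : ℕ) : (f4 (2 * 3 ^ a) : ZMod 3) = 1 := by
  rw [mul_comm, cast_f4_three_pow_mul a two_ne_zero,
    show 2 = 3 * 0 + 2 from rfl, cast_f4_three_mul_add_two, diagCoeff_zero_right]

theorem cast_f4_three_pow_add_three_pow {a b : ℕ} (hba : b < a) :
    (f4 (3 ^ a + 3 ^ b) : ZMod 3) = -1 := by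
  rw [show 3 ^ a + 3 ^ b = 3 ^ b * (3 * 3 ^ (a - b - 1) + 1) by
      rw [← pow_succ', mul_add, ← pow_add, mul_one]; congr 2; omega,
    cast_f4_three_pow_mul b (by omega), cast_f4_three_mul_add_one, diagCoeff_zero_three_pow]

theorem exists_of_cast_f4_ne_zero {n : ℕ} (h : (f4 n : ZMod 3) ≠ 0) :
    (∃ m, n = 3 ^ m ∨ n = 2 * 3 ^ m) ∨ ∃ a b, b < a ∧ n = 3 ^ a + 3 ^ b := by
  induction n using Nat.strong_induction_on with
  | _ n ih =>
    obtain ⟨m, rfl | rfl | rfl⟩ : ∃ m, n = 3 * m ∨ n = 3 * m + 1 ∨ n = 3 * m + 2 :=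
      ⟨n / 3, by omega⟩
    · obtain rfl | hm := eq_or_ne m 0
      · simp [f4] at h
      rw [cast_f4_three_mul hm] at h
      obtain ⟨c, rfl | rfl⟩ | ⟨a, b, hba, rfl⟩ := ih m (by omega) h
      · exact Or.inl ⟨c + 1, Or.inl (by ring)⟩
      · exact Or.inl ⟨c + 1, Or.inr (by ring)⟩
      · exact Or.inr ⟨a + 1, b + 1, by omega, by ring⟩
    · rw [cast_f4_three_mul_add_one] at h
      obtain rfl | ⟨a, rfl⟩ := eq_zero_or_eq_three_pow_of_diagCoeff_zero_ne_zero h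
      · exact Or.inl ⟨0, Or.inl rfl⟩
      · exact Or.inr ⟨a + 1, 0, by omega, by ring⟩
    · rw [cast_f4_three_mul_add_two] at h
      obtain rfl : m = 0 := by_contra fun hm => h (diagCoeff_one_of_ne_zero hm)
      exact Or.inl ⟨0, Or.inr rfl⟩

theorem f4_mod_three_general (n : ℕ) :
    ((∃ m : ℕ, n = 3 ^ m ∨ n = 2 * 3 ^ m) → f4 n % 3 = 1) ∧
    ((∃ a b : ℕ, b < a ∧ n = 3 ^ a + 3 ^ b) → f4 n % 3 = 2) ∧
    ((¬ (∃ m : ℕ, n = 3 ^ m ∨ n = 2 * 3 ^ m) ∧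
      ¬ (∃ a b : ℕ, b < a ∧ n = 3 ^ a + 3 ^ b)) → f4 n % 3 = 0) := by
  simp only [← ZMod.val_natCast]
  refine ⟨?_, ?_, fun ⟨h12, h3⟩ => ?_⟩
  · rintro ⟨m, rfl | rfl⟩
    · rw [cast_f4_three_pow]; rfl
    · rw [cast_f4_two_mul_three_pow]; rfl
  · rintro ⟨a, b, hba, rfl⟩
    rw [cast_f4_three_pow_add_three_pow hba]; rfl
  · rw [ZMod.val_eq_zero]
    by_contra h
    exact (exists_of_cast_f4_ne_zero h).elim h12 h3

/-- The Deutsch–Sagan-type congruence for `f₄`. -/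
theorem f4_mod_three (n : ℕ) (hn : 1 ≤ n) :
    ((∃ m : ℕ, n = 3 ^ m ∨ n = 2 * 3 ^ m) → f4 n % 3 = 1) ∧
    ((∃ a b : ℕ, b < a ∧ n = 3 ^ a + 3 ^ b) → f4 n % 3 = 2) ∧
    ((¬ (∃ m : ℕ, n = 3 ^ m ∨ n = 2 * 3 ^ m) ∧
      ¬ (∃ a b : ℕ, b < a ∧ n = 3 ^ a + 3 ^ b)) → f4 n % 3 = 0) :=
  f4_mod_three_general n
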